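/- arXiv:1906.04125 — 4 statements merged into one kernel-verified Lean document; each statement's English description precedes it below -/
import Mathlib

section
/- For every z ≠ 0, as α → ∞ the density f(z; α) of BASLG₂(α) converges to the bimodal logistic density (15 z⁴/(7π⁴)) · e^{-z}/(1 + e^{-z})^2. -/
open Real Filter

noncomputable def C₂ (α : ℝ) : ℝ := 4 + 8 * π ^ 2 * α ^ 2 / 3 + 7 * π ^ 4 * α ^ 4 / 15

noncomputable def f (z α : ℝ) : ℝ :=
  ((1 - α * z) ^ 2 + 1) ^ 2 * Real.exp (-z) / (C₂ α * (1 + Real.exp (-z)) ^ 2)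

theorem BASLG2_limit_BLG (z : ℝ) (hz : z ≠ 0) :
    Tendsto (fun α : ℝ => f z α) atTop
      (nhds ((15 * z ^ 4 / (7 * π ^ 4)) * (Real.exp (-z) / (1 + Real.exp (-z)) ^ 2))) := by
  have hπ : (0:ℝ) < π := Real.pi_pos
  set E : ℝ := Real.exp (-z) / (1 + Real.exp (-z)) ^ 2 with hE
  set g : ℝ → ℝ := fun t =>
    ((t - z) ^ 2 + t ^ 2) ^ 2 / (4 * t ^ 4 + 8 * π ^ 2 * t ^ 2 / 3 + 7 * π ^ 4 / 15) * E
    with hg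
  have hden0 : (4 * (0:ℝ) ^ 4 + 8 * π ^ 2 * 0 ^ 2 / 3 + 7 * π ^ 4 / 15) ≠ 0 := by
    positivity
  have hcont : ContinuousAt g 0 := by
    apply ContinuousAt.mul _ continuousAt_const
    exact ContinuousAt.div (by fun_prop) (by fun_prop) hden0
  have hval : g 0 = (15 * z ^ 4 / (7 * π ^ 4)) * E := by
    simp only [hg]
    rw [div_mul_eq_mul_div, div_mul_eq_mul_div, div_eq_div_iff hden0 (by positivity)]
    ring
  have hlim : Tendsto (fun α : ℝ => g α⁻¹) atTop
      (nhds ((15 * z ^ 4 / (7 * π ^ 4)) * E)) := by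
    rw [← hval]
    exact hcont.tendsto.comp tendsto_inv_atTop_zero
  refine hlim.congr' ?_
  filter_upwards [eventually_gt_atTop (0:ℝ)] with α hα
  have hα' : α ≠ 0 := ne_of_gt hα
  have hexp : (0:ℝ) < 1 + Real.exp (-z) := by positivity
  have hC : C₂ α ≠ 0 := by unfold C₂; positivity
  simp only [hg, hE, f, C₂]
  rw [div_mul_div_comm, div_eq_div_iff (by positivity) (by positivity)]
  field_simp
end

section
/- For every positive integer k and real α, the 2k-th moment of Z ~ BASLG₂(α) equals (2/C₂(α))·[4(1 - 2^{1-2k})Γ(2k+1)ζ(2k) + 8α²(1 - 2^{-(2k+1)})Γ(2k+3)ζ(2k+2) + α⁴(1 - 2^{-(2k+3)})Γ(2k+5)ζ(2k+4)]. -/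
open Real MeasureTheory

noncomputable def zetaR (s : ℕ) : ℝ := ∑' n : ℕ, 1 / (n + 1 : ℝ) ^ s

/-! Up to the factor `1 / C₂(α)`, the density is the polynomial `((1 - αz)² + 1)²` times the
logistic density `g(z) = e^{-z} / (1 + e^{-z})²`, so the moment is a combination of moments of `g`,
whose odd ones vanish because `g` is even. For `t > 0`, differentiating the geometric series in
`-e^{-t}` gives `g(t) = ∑ᵢ (-1)ⁱ (i + 1) e^{-(i+1)t}`; integrating against `tᵖ` term by term
(absolutely convergent for `p ≥ 2`) gives `∫₀^∞ tᵖ g = Γ(p + 1) η(p)`, and the Dirichlet eta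
function is `η(p) = (1 - 2^{1-p}) ζ(p)`. -/

open Set Filter

noncomputable def logisticDensity (z : ℝ) : ℝ := exp (-z) / (1 + exp (-z)) ^ 2

lemma logisticDensity_neg (z : ℝ) : logisticDensity (-z) = logisticDensity z := by
  have hz : exp z * exp (-z) = 1 := by rw [← exp_add, add_neg_cancel, exp_zero]
  unfold logisticDensity
  rw [neg_neg, div_eq_div_iff (by positivity) (by positivity)]
  linear_combination (exp (-z) - exp z) * hz

lemma logisticDensity_nonneg (z : ℝ) : 0 ≤ logisticDensity z := by
  unfold logisticDensity; positivity

lemma logisticDensity_abs (z : ℝ) : logisticDensity |z| = logisticDensity z := by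
  rcases abs_choice z with h | h <;> simp only [h, logisticDensity_neg]

lemma logisticDensity_le_exp_neg_abs (z : ℝ) : logisticDensity z ≤ exp (-|z|) := by
  rw [← logisticDensity_abs]
  exact div_le_self (exp_pos _).le (one_le_pow₀ (le_add_of_nonneg_right (exp_pos _).le))

lemma continuous_logisticDensity : Continuous logisticDensity :=
  (continuous_exp.comp continuous_neg).div (by fun_prop) fun z ↦ by positivity

lemma hasSum_logisticDensity {t : ℝ} (ht : 0 < t) :
    HasSum (fun i : ℕ ↦ (-1) ^ i * ((i : ℝ) + 1) * exp (-(((i : ℝ) + 1) * t)))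
      (logisticDensity t) := by
  have hx : ‖-exp (-t)‖ < 1 := by
    rw [norm_neg, norm_of_nonneg (exp_pos _).le]
    exact exp_lt_one_iff.mpr (neg_lt_zero.mpr ht)
  have h := ((hasSum_nat_add_iff' (f := fun n : ℕ ↦ (n : ℝ) * (-exp (-t)) ^ n) 1).mpr
    (hasSum_coe_mul_geometric_of_norm_lt_one hx)).neg
  have hterm : ∀ i : ℕ, (-1) ^ i * ((i : ℝ) + 1) * exp (-(((i : ℝ) + 1) * t))
      = -(((i + 1 : ℕ) : ℝ) * (-exp (-t)) ^ (i + 1)) := by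
    intro i
    rw [neg_pow (exp (-t)), ← exp_nat_mul, pow_succ]
    push_cast
    ring_nf
  have hsum : -(-exp (-t) / (1 - -exp (-t)) ^ 2 - ∑ i ∈ Finset.range 1, (i : ℝ) * (-exp (-t)) ^ i)
      = logisticDensity t := by
    simp [logisticDensity, neg_div]
  simpa only [hterm, hsum] using h

lemma integrable_comp_abs_of_integrableOn_Ioi {F : ℝ → ℝ} (hF : IntegrableOn F (Ioi 0)) :
    Integrable fun x ↦ F |x| := by
  have hIoi : IntegrableOn (fun x ↦ F |x|) (Ioi 0) :=
    hF.congr_fun (fun x hx ↦ by rw [abs_of_pos hx]) measurableSet_Ioi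
  have hIic : IntegrableOn (fun x ↦ F |x|) (Iic 0) := by
    have hneg : MeasurableEmbedding fun x : ℝ ↦ -x := (Homeomorph.neg ℝ).measurableEmbedding
    rw [← Measure.map_neg_eq_self (volume : Measure ℝ), hneg.integrableOn_map_iff]
    simp_rw [Function.comp_def, abs_neg, neg_preimage, neg_Iic, neg_zero]
    exact Iff.mpr integrableOn_Ici_iff_integrableOn_Ioi hIoi
  simpa only [Iic_union_Ioi, integrableOn_univ] using hIic.union hIoi

lemma integrableOn_pow_mul_exp_neg_mul (p : ℕ) {c : ℝ} (hc : 0 < c) :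
    IntegrableOn (fun t : ℝ ↦ t ^ p * exp (-(c * t))) (Ioi 0) := by
  have h := integrableOn_rpow_mul_exp_neg_mul_rpow (s := p)
    (neg_one_lt_zero.trans_le p.cast_nonneg) one_pos hc
  refine h.congr_fun (fun t _ ↦ ?_) measurableSet_Ioi
  simp only [rpow_one, rpow_natCast, neg_mul]

lemma integral_pow_mul_exp_neg_mul_Ioi (p : ℕ) {c : ℝ} (hc : 0 < c) :
    ∫ t in Ioi 0, t ^ p * exp (-(c * t)) = Gamma (p + 1) / c ^ (p + 1) := by
  have h := integral_rpow_mul_exp_neg_mul_Ioi (a := p + 1) (by positivity) hc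
  simp only [add_sub_cancel_right, rpow_natCast] at h
  rw [h, ← rpow_natCast, div_rpow zero_le_one hc.le]
  push_cast
  rw [one_rpow]
  ring

lemma integrable_pow_mul_logisticDensity (j : ℕ) :
    Integrable fun z : ℝ ↦ z ^ j * logisticDensity z := by
  have hdom := integrable_comp_abs_of_integrableOn_Ioi
    (by simpa using integrableOn_pow_mul_exp_neg_mul j one_pos)
  refine hdom.mono' ((continuous_pow j).mul continuous_logisticDensity).aestronglyMeasurable
    (Eventually.of_forall fun z ↦ ?_)
  rw [norm_mul, norm_pow, norm_of_nonneg (logisticDensity_nonneg z)]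
  exact mul_le_mul_of_nonneg_left (logisticDensity_le_exp_neg_abs z) (by positivity)

lemma summable_one_div_nat_add_one_pow {s : ℕ} (hs : 1 < s) :
    Summable fun n : ℕ ↦ 1 / ((n : ℝ) + 1) ^ s := by
  simpa using (summable_nat_add_iff 1).mpr (summable_one_div_nat_pow.mpr hs)

lemma tsum_neg_one_pow_div_pow {s : ℕ} (hs : 1 < s) :
    ∑' n : ℕ, (-1) ^ n / ((n : ℝ) + 1) ^ s = (1 - (2 : ℝ) ^ ((1 : ℤ) - s)) * zetaR s := by
  set a : ℕ → ℝ := fun n ↦ 1 / ((n : ℝ) + 1) ^ s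
  have ha : HasSum a (zetaR s) := (summable_one_div_nat_add_one_pow hs).hasSum
  have hterm : ∀ k, a (2 * k + 1) = (2 : ℝ) ^ (-(s : ℤ)) * a k := fun k ↦ by
    simp only [a, zpow_neg, zpow_natCast]
    push_cast
    rw [show (2 : ℝ) * k + 1 + 1 = 2 * (k + 1) by ring, mul_pow]
    field_simp
  have hodd : HasSum (fun k ↦ a (2 * k + 1)) ((2 : ℝ) ^ (-(s : ℤ)) * zetaR s) := by
    simpa only [hterm] using ha.mul_left ((2 : ℝ) ^ (-(s : ℤ)))
  obtain ⟨E, heven⟩ : Summable fun k ↦ a (2 * k) :=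
    ha.summable.comp_injective fun _ _ h ↦ by simpa using h
  have hE : E + (2 : ℝ) ^ (-(s : ℤ)) * zetaR s = zetaR s := (heven.even_add_odd hodd).unique ha
  have halt : HasSum (fun n : ℕ ↦ (-1) ^ n / ((n : ℝ) + 1) ^ s)
      (E + -((2 : ℝ) ^ (-(s : ℤ)) * zetaR s)) := by
    refine HasSum.even_add_odd ?_ ?_
    · simpa [a, pow_mul] using heven
    · simpa [a, pow_succ, pow_mul, neg_div] using hodd.neg
  have htwo : (2 : ℝ) ^ ((1 : ℤ) - s) = 2 * 2 ^ (-(s : ℤ)) := by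
    rw [sub_eq_add_neg, zpow_add₀ two_ne_zero, zpow_one]
  rw [halt.tsum_eq, htwo]
  linear_combination hE

lemma integral_pow_mul_logisticDensity_Ioi {p : ℕ} (hp : 1 < p) :
    ∫ t in Ioi 0, t ^ p * logisticDensity t
      = Gamma (p + 1) * ∑' i : ℕ, (-1) ^ i / ((i : ℝ) + 1) ^ p := by
  set E : ℕ → ℝ → ℝ := fun i t ↦ t ^ p * exp (-(((i : ℝ) + 1) * t))
  set F : ℕ → ℝ → ℝ := fun i t ↦ (-1) ^ i * ((i : ℝ) + 1) * E i t
  have hE : ∀ i : ℕ, ((i : ℝ) + 1) * ∫ t in Ioi 0, E i t = Gamma (p + 1) / ((i : ℝ) + 1) ^ p :=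
    fun i ↦ by
      rw [integral_pow_mul_exp_neg_mul_Ioi p (by positivity), pow_succ]
      field_simp
  have hF_int : ∀ i, Integrable (F i) (volume.restrict (Ioi 0)) := fun i ↦
    (integrableOn_pow_mul_exp_neg_mul p (by positivity)).const_mul _
  have hF_norm : ∀ i, ∫ t in Ioi 0, ‖F i t‖ = Gamma (p + 1) * (1 / ((i : ℝ) + 1) ^ p) := by
    intro i
    rw [setIntegral_congr_fun measurableSet_Ioi (g := fun t ↦ ((i : ℝ) + 1) * E i t)
      fun t ht ↦ ?_, integral_const_mul, hE, mul_one_div]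
    have : 0 ≤ E i t := mul_nonneg (pow_nonneg (le_of_lt ht) p) (exp_pos _).le
    simp [F, norm_mul, norm_of_nonneg this, abs_of_nonneg (by positivity : (0 : ℝ) ≤ i + 1)]
  have hF_sum : ∀ t ∈ Ioi (0 : ℝ), ∑' i, F i t = t ^ p * logisticDensity t := fun t ht ↦
    (((hasSum_logisticDensity ht).mul_left (t ^ p)).congr_fun fun i ↦ by ring).tsum_eq
  have h := hasSum_integral_of_summable_integral_norm hF_int <| by
    simpa only [hF_norm] using (summable_one_div_nat_add_one_pow hp).mul_left (Gamma (p + 1))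
  rw [← setIntegral_congr_fun measurableSet_Ioi hF_sum, ← h.tsum_eq, ← tsum_mul_left]
  congr 1 with i
  rw [integral_const_mul, mul_assoc, hE]
  ring

lemma integral_pow_mul_logisticDensity_of_even {m : ℕ} (hm : 0 < m) :
    ∫ z, z ^ (2 * m) * logisticDensity z
      = 2 * (1 - (2 : ℝ) ^ ((1 : ℤ) - 2 * m)) * Gamma (2 * m + 1) * zetaR (2 * m) := by
  have hp : 1 < 2 * m := by omega
  have h := integral_comp_abs (f := fun t ↦ t ^ (2 * m) * logisticDensity t)
  simp only [(even_two_mul m).pow_abs, logisticDensity_abs] at h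
  rw [h, integral_pow_mul_logisticDensity_Ioi hp, tsum_neg_one_pow_div_pow hp]
  push_cast
  ring

lemma integral_pow_mul_logisticDensity_of_odd {j : ℕ} (hj : Odd j) :
    ∫ z, z ^ j * logisticDensity z = 0 := by
  have h := integral_neg_eq_self (fun z : ℝ ↦ z ^ j * logisticDensity z) volume
  simp only [hj.neg_pow, logisticDensity_neg, neg_mul, integral_neg] at h
  linarith

lemma pow_mul_f_eq_sum (n : ℕ) (z α : ℝ) :
    z ^ n * f z α = ∑ j : Fin 5, (C₂ α)⁻¹ *
      ![4, -8 * α, 8 * α ^ 2, -4 * α ^ 3, α ^ 4] j * (z ^ (n + j) * logisticDensity z) := by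
  have : 0 < 1 + exp (-z) := by positivity
  simp only [f, logisticDensity, Fin.sum_univ_five, Fin.isValue, Fin.coe_ofNat_eq_mod,
    Nat.reduceMod, add_zero, Matrix.cons_val_zero, Matrix.cons_val_one, Matrix.cons_val]
  field_simp
  ring

lemma integral_pow_mul_f (n : ℕ) (α : ℝ) :
    ∫ z, z ^ n * f z α = (C₂ α)⁻¹ *
      (4 * (∫ z, z ^ n * logisticDensity z) - 8 * α * (∫ z, z ^ (n + 1) * logisticDensity z)
        + 8 * α ^ 2 * (∫ z, z ^ (n + 2) * logisticDensity z)
        - 4 * α ^ 3 * (∫ z, z ^ (n + 3) * logisticDensity z)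
        + α ^ 4 * ∫ z, z ^ (n + 4) * logisticDensity z) := by
  simp_rw [pow_mul_f_eq_sum]
  rw [integral_finsetSum _ fun j _ ↦ (integrable_pow_mul_logisticDensity _).const_mul _]
  simp only [integral_const_mul, Fin.sum_univ_five, Fin.isValue, Fin.coe_ofNat_eq_mod,
    Nat.reduceMod, add_zero, Matrix.cons_val_zero, Matrix.cons_val_one, Matrix.cons_val]
  ring

theorem BASLG2_even_moments (k : ℕ) (hk : 0 < k) (α : ℝ) :
    ∫ z : ℝ, z ^ (2 * k) * f z α
      = (2 / C₂ α) *
        (4 * (1 - (2 : ℝ) ^ ((1 : ℤ) - 2 * k)) * Real.Gamma (2 * k + 1) * zetaR (2 * k)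
          + 8 * α ^ 2 * (1 - (2 : ℝ) ^ (-(2 * (k : ℤ) + 1))) * Real.Gamma (2 * k + 3) * zetaR (2 * k + 2)
          + α ^ 4 * (1 - (2 : ℝ) ^ (-(2 * (k : ℤ) + 3))) * Real.Gamma (2 * k + 5) * zetaR (2 * k + 4)) := by
  rw [integral_pow_mul_f,
    integral_pow_mul_logisticDensity_of_odd (j := 2 * k + 1) ⟨k, rfl⟩,
    integral_pow_mul_logisticDensity_of_odd (j := 2 * k + 3) ⟨k + 1, rfl⟩,
    show 2 * k + 2 = 2 * (k + 1) by ring, show 2 * k + 4 = 2 * (k + 2) by ring,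
    integral_pow_mul_logisticDensity_of_even hk,
    integral_pow_mul_logisticDensity_of_even (by omega : 0 < k + 1),
    integral_pow_mul_logisticDensity_of_even (by omega : 0 < k + 2)]
  push_cast
  ring_nf
end

section
/- The supremum over z ∈ ℝ of the ratio f(z; α)/g₁(z; α) of the BASLG₂(α) density to its symmetric component SCBASLG₂(α) density equals (3 + 2√2)/3; equivalently, sup_{z} [(1-αz)²+1]²/(4 + 8α²z² + α⁴z⁴) = (3 + 2√2)/3 for α ≠ 0. -/
open Real

lemma BASLG2_key (t : ℝ) :
    ((1 - t) ^ 2 + 1) ^ 2 / (4 + 8 * t ^ 2 + t ^ 4) ≤ (3 + 2 * Real.sqrt 2) / 3 := by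
  have h2 : Real.sqrt 2 ^ 2 = 2 := Real.sq_sqrt (by norm_num)
  have hs : (0:ℝ) < Real.sqrt 2 := Real.sqrt_pos.mpr (by norm_num)
  set s := Real.sqrt 2 with hsdef
  rw [div_le_div_iff₀ (by positivity) (by norm_num)]
  have key : (3 + 2 * s) * (4 + 8 * t ^ 2 + t ^ 4) - ((1 - t) ^ 2 + 1) ^ 2 * 3
      = 2 * s * (t + s) ^ 2 * ((t + s / 2) ^ 2 + 3 / 2) := by
    linear_combination (-6 * t ^ 3 - 13 * s / 2 * t ^ 2 - 3 * (s ^ 2 + 4) * t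
      - s / 2 * (s ^ 2 + 8)) * h2
  nlinarith [mul_nonneg (mul_nonneg (by positivity : (0:ℝ) ≤ 2 * s) (sq_nonneg (t + s)))
      (by positivity : (0:ℝ) ≤ (t + s / 2) ^ 2 + 3 / 2), key]

theorem BASLG2_ratio_sup (α : ℝ) (hα : α ≠ 0) :
    (⨆ z : ℝ, ((1 - α * z) ^ 2 + 1) ^ 2 / (4 + 8 * α ^ 2 * z ^ 2 + α ^ 4 * z ^ 4))
      = (3 + 2 * Real.sqrt 2) / 3 := by
  have h2 : Real.sqrt 2 ^ 2 = 2 := Real.sq_sqrt (by norm_num)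
  have hbound : ∀ z : ℝ,
      ((1 - α * z) ^ 2 + 1) ^ 2 / (4 + 8 * α ^ 2 * z ^ 2 + α ^ 4 * z ^ 4)
        ≤ (3 + 2 * Real.sqrt 2) / 3 := by
    intro z
    have hrw : 4 + 8 * α ^ 2 * z ^ 2 + α ^ 4 * z ^ 4
        = 4 + 8 * (α * z) ^ 2 + (α * z) ^ 4 := by ring
    rw [hrw]
    exact BASLG2_key (α * z)
  apply le_antisymm
  · exact ciSup_le hbound
  · have hle := le_ciSup ⟨(3 + 2 * Real.sqrt 2) / 3, fun x ⟨z, hz⟩ => hz ▸ hbound z⟩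
      (-Real.sqrt 2 / α)
    refine le_trans (le_of_eq ?_) hle
    have h1 : α * (-Real.sqrt 2 / α) = -Real.sqrt 2 := by field_simp [mul_comm]
    have hrw : 4 + 8 * α ^ 2 * (-Real.sqrt 2 / α) ^ 2 + α ^ 4 * (-Real.sqrt 2 / α) ^ 4
        = 4 + 8 * (α * (-Real.sqrt 2 / α)) ^ 2 + (α * (-Real.sqrt 2 / α)) ^ 4 := by ring
    rw [hrw, h1]
    rw [div_eq_div_iff (by norm_num) (by positivity)]
    linear_combination (2 * Real.sqrt 2 * (Real.sqrt 2 ^ 2 + 4)) * h2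
end

section
/- For every real x, [(1 - x)² + 1]² ≤ ((3 + 2√2)/3)·(4 + 8x² + x⁴), with equality attained at some real x. -/
open Real

theorem rejection_bound :
    (∀ x : ℝ, ((1 - x) ^ 2 + 1) ^ 2 ≤ ((3 + 2 * Real.sqrt 2) / 3) * (4 + 8 * x ^ 2 + x ^ 4)) ∧
    (∃ x : ℝ, ((1 - x) ^ 2 + 1) ^ 2 = ((3 + 2 * Real.sqrt 2) / 3) * (4 + 8 * x ^ 2 + x ^ 4)) := by
  have hs : Real.sqrt 2 ^ 2 = 2 := Real.sq_sqrt (by norm_num)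
  have hs1 : (1 : ℝ) ≤ Real.sqrt 2 := by nlinarith [Real.sqrt_nonneg 2]
  constructor
  · intro x
    set s := Real.sqrt 2 with hsdef
    have key : s * ((3 + 2 * s) * (4 + 8 * x ^ 2 + x ^ 4) - 3 * ((1 - x) ^ 2 + 1) ^ 2)
        = ((x + s) * (2 * x + s)) ^ 2 + 6 * (x + s) ^ 2 := by
      linear_combination (2 * x ^ 4 + 3 * x ^ 2 - 6 * s * x - s ^ 2) * hs
    nlinarith [sq_nonneg ((x + s) * (2 * x + s)), sq_nonneg (x + s), hs1, key]
  · refine ⟨-Real.sqrt 2, by nlinarith [hs]⟩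
end
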